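/- arXiv:1903.09892 — 6 statements merged into one kernel-verified Lean document; each statement's English description precedes it below -/
import Mathlib

section
/- For integers k, l with 0 ≤ l ≤ k and l ≠ -1, k ≠ l-1, the vector field Θ^l_k equals ∇(x^{l+1}) × ∇( -(y^2+z^2)^{k-l+1} / (2(l+1)(k-l+1)) ). -/
noncomputable def px (f : ℝ → ℝ → ℝ → ℝ) (x y z : ℝ) : ℝ := deriv (fun t => f t y z) x
noncomputable def py (f : ℝ → ℝ → ℝ → ℝ) (x y z : ℝ) : ℝ := deriv (fun t => f x t z) y
noncomputable def pz (f : ℝ → ℝ → ℝ → ℝ) (x y z : ℝ) : ℝ := deriv (fun t => f x y t) z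

/-- Gradient of a scalar function on `ℝ³`. -/
noncomputable def grad (f : ℝ → ℝ → ℝ → ℝ) (x y z : ℝ) : ℝ × ℝ × ℝ :=
  (px f x y z, py f x y z, pz f x y z)

/-- Cross product in `ℝ³`. -/
def cross (a b : ℝ × ℝ × ℝ) : ℝ × ℝ × ℝ :=
  (a.2.1 * b.2.2 - a.2.2 * b.2.1, a.2.2 * b.1 - a.1 * b.2.2, a.1 * b.2.1 - a.2.1 * b.1)

/-- Curl of a vector field on `ℝ³` given by its three components. -/
noncomputable def curl (v1 v2 v3 : ℝ → ℝ → ℝ → ℝ) (x y z : ℝ) : ℝ × ℝ × ℝ :=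
  (py v3 x y z - pz v2 x y z, pz v1 x y z - px v3 x y z, px v2 x y z - py v1 x y z)

/-- Components of `F^l_k = x^l (y²+z²)^{k-l} ((k-l+1)x ∂x - ((l+1)/2) y ∂y - ((l+1)/2) z ∂z)`. -/
noncomputable def F1 (l k : ℤ) (x y z : ℝ) : ℝ :=
  ((k : ℝ) - (l : ℝ) + 1) * x ^ (l + 1).toNat * (y ^ 2 + z ^ 2) ^ (k - l).toNat
noncomputable def F2 (l k : ℤ) (x y z : ℝ) : ℝ :=
  -(((l : ℝ) + 1) / 2) * x ^ l.toNat * y * (y ^ 2 + z ^ 2) ^ (k - l).toNat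
noncomputable def F3 (l k : ℤ) (x y z : ℝ) : ℝ :=
  -(((l : ℝ) + 1) / 2) * x ^ l.toNat * z * (y ^ 2 + z ^ 2) ^ (k - l).toNat

/-- Components of `Θ^l_k = x^l (y²+z²)^{k-l} (z ∂y - y ∂z)`. -/
noncomputable def T1 (_l _k : ℤ) (_x _y _z : ℝ) : ℝ := 0
noncomputable def T2 (l k : ℤ) (x y z : ℝ) : ℝ :=
  x ^ l.toNat * (y ^ 2 + z ^ 2) ^ (k - l).toNat * z
noncomputable def T3 (l k : ℤ) (x y z : ℝ) : ℝ :=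
  -(x ^ l.toNat * (y ^ 2 + z ^ 2) ^ (k - l).toNat * y)

/-!
`∇(x^{l+1}) = ((l+1) x^l, 0, 0)` and the gradient of a function `g(y, z)` lies in the `yz`-plane,
so their cross product is `(l+1) x^l (0, -∂_z g, ∂_y g)`. Differentiating `(y²+z²)^{k-l+1}` produces
the factor `2 (k-l+1)`, and together with `l + 1` it cancels the normalizing constant exactly.
-/

theorem grad_fun_x (g : ℝ → ℝ) (x y z : ℝ) :
    grad (fun x _ _ => g x) x y z = (deriv g x, 0, 0) := by
  simp only [grad, px, py, pz, deriv_const]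

theorem grad_fun_yz (h : ℝ → ℝ → ℝ) (x y z : ℝ) :
    grad (fun _ y z => h y z) x y z = (0, deriv (h · z) y, deriv (h y ·) z) := by
  simp only [grad, px, py, pz, deriv_const]

theorem cross_x_yz (a b c : ℝ) : cross (a, 0, 0) (0, b, c) = (0, -(a * c), a * b) := by
  simp only [cross, Prod.mk.injEq]
  exact ⟨by ring, by ring, by ring⟩

theorem hasDerivAt_sq_add_sq_pow_succ (n : ℕ) (y z : ℝ) :
    HasDerivAt (fun t => (t ^ 2 + z ^ 2) ^ (n + 1)) (2 * (n + 1) * y * (y ^ 2 + z ^ 2) ^ n) y := by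
  refine (((hasDerivAt_pow 2 y).add_const (z ^ 2)).fun_pow (n + 1)).congr_deriv ?_
  simp only [Nat.add_sub_cancel]
  push_cast
  ring

theorem deriv_sq_add_sq_pow_succ_left (n : ℕ) (y z : ℝ) :
    deriv (fun t => (t ^ 2 + z ^ 2) ^ (n + 1)) y = 2 * (n + 1) * y * (y ^ 2 + z ^ 2) ^ n :=
  (hasDerivAt_sq_add_sq_pow_succ n y z).deriv

theorem deriv_sq_add_sq_pow_succ_right (n : ℕ) (y z : ℝ) :
    deriv (fun t => (y ^ 2 + t ^ 2) ^ (n + 1)) z = 2 * (n + 1) * z * (y ^ 2 + z ^ 2) ^ n := by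
  simp_rw [add_comm (y ^ 2)]
  exact (hasDerivAt_sq_add_sq_pow_succ n z y).deriv

theorem cross_grad_pow_succ (n m : ℕ) (x y z : ℝ) :
    cross (grad (fun x _ _ => x ^ (n + 1)) x y z)
      (grad (fun _ y z => -(y ^ 2 + z ^ 2) ^ (m + 1) / (2 * ((n : ℝ) + 1) * ((m : ℝ) + 1))) x y z) =
      (0, x ^ n * (y ^ 2 + z ^ 2) ^ m * z, -(x ^ n * (y ^ 2 + z ^ 2) ^ m * y)) := by
  rw [grad_fun_x, grad_fun_yz, cross_x_yz]
  simp only [deriv_pow_field, deriv_div_const, deriv.fun_neg, deriv_sq_add_sq_pow_succ_left,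
    deriv_sq_add_sq_pow_succ_right, Prod.mk.injEq]
  refine ⟨trivial, ?_, ?_⟩ <;> field_simp <;> push_cast <;> ring

theorem Theta_eulerForm_general (k l : ℤ) (hl : 0 ≤ l) (hlk : l ≤ k) :
    ∀ x y z : ℝ,
      (T1 l k x y z, T2 l k x y z, T3 l k x y z) =
        cross (grad (fun x _ _ => x ^ (l + 1).toNat) x y z)
          (grad (fun _ y z =>
            -(y ^ 2 + z ^ 2) ^ (k - l + 1).toNat /
              (2 * ((l : ℝ) + 1) * ((k : ℝ) - (l : ℝ) + 1))) x y z) := by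
  intro x y z
  obtain ⟨n, rfl⟩ := Int.eq_ofNat_of_zero_le hl
  obtain ⟨m, rfl⟩ : ∃ m : ℕ, k = n + m := ⟨(k - n).toNat, by omega⟩
  have hn : ((n : ℤ) + 1).toNat = n + 1 := by omega
  have hm : ((n : ℤ) + m - n + 1).toNat = m + 1 := by omega
  have hcast : ((n + m : ℤ) : ℝ) - ((n : ℤ) : ℝ) = m := by push_cast; ring
  rw [hn, hm, hcast, Int.cast_natCast, cross_grad_pow_succ]
  simp only [T1, T2, T3, add_sub_cancel_left, Int.toNat_natCast]

/-- Euler's form for `Θ^l_k`: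
`Θ^l_k = ∇(x^{l+1}) × ∇( -(y²+z²)^{k-l+1} / (2(l+1)(k-l+1)) )`. -/
theorem Theta_eulerForm (k l : ℤ) (hl : 0 ≤ l) (hlk : l ≤ k)
    (hl' : l ≠ -1) (hk' : k ≠ l - 1) :
    ∀ x y z : ℝ,
      (T1 l k x y z, T2 l k x y z, T3 l k x y z) =
        cross (grad (fun x _ _ => x ^ (l + 1).toNat) x y z)
          (grad (fun _ y z =>
            -(y ^ 2 + z ^ 2) ^ (k - l + 1).toNat /
              (2 * ((l : ℝ) + 1) * ((k : ℝ) - (l : ℝ) + 1))) x y z) :=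
  Theta_eulerForm_general k l hl hlk
end

section
/- For integers k, l with 0 ≤ l ≤ k, the vector field F^l_k equals the curl of the vector field A = (1/2) x^{l+1} (y^2+z^2)^{k-l} ( -z e_y + y e_z ); that is, F^l_k = ∇ × A. -/
/-! With `r = y² + z²`, the `y`- and `z`-derivatives of `rᵐ y` and `rᵐ z` add up to
`2 rᵐ + 2m rᵐ⁻¹ (y² + z²) = 2 (m + 1) rᵐ`, which gives the `x`-component of `∇ × A`; the other two
components come from `∂ₓ x^{l+1} = (l + 1) xˡ`. -/

-- At `m = 0` the truncated exponent `m - 1` is harmless, as its term carries the factor `m`.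
theorem hasDerivAt_sq_add_pow_mul_self (c : ℝ) (m : ℕ) (t : ℝ) :
    HasDerivAt (fun t : ℝ => (t ^ 2 + c) ^ m * t)
      ((t ^ 2 + c) ^ m + 2 * m * t ^ 2 * (t ^ 2 + c) ^ (m - 1)) t := by
  refine ((((hasDerivAt_pow 2 t).add_const c).fun_pow m).fun_mul (hasDerivAt_id' t)).congr_deriv ?_
  norm_num
  ring

theorem natCast_mul_pow_pred_mul_self (r : ℝ) (m : ℕ) :
    (m : ℝ) * r ^ (m - 1) * r = m * r ^ m := by
  cases m with
  | zero => simp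
  | succ m => rw [Nat.add_sub_cancel, pow_succ]; ring

theorem py_potential (n m : ℕ) (x y z : ℝ) :
    py (fun x y z => (1 / 2) * x ^ (n + 1) * (y ^ 2 + z ^ 2) ^ m * y) x y z =
      (1 / 2) * x ^ (n + 1) * ((y ^ 2 + z ^ 2) ^ m + 2 * m * y ^ 2 * (y ^ 2 + z ^ 2) ^ (m - 1)) := by
  have h := ((hasDerivAt_sq_add_pow_mul_self (z ^ 2) m y).const_mul ((1 / 2) * x ^ (n + 1)))
  simp only [py, ← mul_assoc] at h ⊢
  exact h.deriv

theorem pz_potential (n m : ℕ) (x y z : ℝ) :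
    pz (fun x y z => (1 / 2) * x ^ (n + 1) * (y ^ 2 + z ^ 2) ^ m * (-z)) x y z =
      -((1 / 2) * x ^ (n + 1) * ((y ^ 2 + z ^ 2) ^ m + 2 * m * z ^ 2 * (y ^ 2 + z ^ 2) ^ (m - 1))) := by
  have h := ((hasDerivAt_sq_add_pow_mul_self (y ^ 2) m z).const_mul (-((1 / 2) * x ^ (n + 1))))
  simp only [pz, add_comm _ (y ^ 2), mul_neg, neg_mul, ← mul_assoc] at h ⊢
  exact h.deriv

theorem px_potential (n m : ℕ) (w : ℝ → ℝ → ℝ) (x y z : ℝ) :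
    px (fun x y z => (1 / 2) * x ^ (n + 1) * (y ^ 2 + z ^ 2) ^ m * w y z) x y z =
      (1 / 2) * ((n + 1) * x ^ n) * (y ^ 2 + z ^ 2) ^ m * w y z := by
  have h := ((((hasDerivAt_pow (n + 1) x).const_mul (1 / 2)).mul_const
    ((y ^ 2 + z ^ 2) ^ m)).mul_const (w y z))
  simp only [px, Nat.add_sub_cancel] at h ⊢
  push_cast at h
  exact h.deriv

theorem curl_potential (n m : ℕ) (x y z : ℝ) :
    curl (fun _ _ _ => 0)
        (fun x y z => (1 / 2) * x ^ (n + 1) * (y ^ 2 + z ^ 2) ^ m * (-z))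
        (fun x y z => (1 / 2) * x ^ (n + 1) * (y ^ 2 + z ^ 2) ^ m * y) x y z =
      ((m + 1) * x ^ (n + 1) * (y ^ 2 + z ^ 2) ^ m,
        -((n + 1) / 2) * x ^ n * y * (y ^ 2 + z ^ 2) ^ m,
        -((n + 1) / 2) * x ^ n * z * (y ^ 2 + z ^ 2) ^ m) := by
  simp only [curl, py_potential, pz_potential, px_potential]
  simp only [py, pz, deriv_const, Prod.mk.injEq]
  refine ⟨?_, by ring, by ring⟩
  linear_combination x ^ (n + 1) * natCast_mul_pow_pred_mul_self (y ^ 2 + z ^ 2) m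

/-- `F^l_k = ∇ × A` with `A = (1/2) x^{l+1} (y²+z²)^{k-l} (-z e_y + y e_z)`. -/
theorem F_vectorPotential (k l : ℤ) (hl : 0 ≤ l) (hlk : l ≤ k) :
    ∀ x y z : ℝ,
      (F1 l k x y z, F2 l k x y z, F3 l k x y z) =
        curl (fun _ _ _ => 0)
          (fun x y z =>
            (1 / 2) * x ^ (l + 1).toNat * (y ^ 2 + z ^ 2) ^ (k - l).toNat * (-z))
          (fun x y z =>
            (1 / 2) * x ^ (l + 1).toNat * (y ^ 2 + z ^ 2) ^ (k - l).toNat * y)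
          x y z := by
  intro x y z
  obtain ⟨n, rfl⟩ := Int.eq_ofNat_of_zero_le hl
  obtain ⟨m, rfl⟩ : ∃ m : ℕ, k = n + m := ⟨(k - n).toNat, by omega⟩
  have hn : ((n : ℤ) + 1).toNat = n + 1 := by omega
  have hm : ((n : ℤ) + m - n).toNat = m := by omega
  rw [hn, hm, curl_potential]
  simp only [F1, F2, F3, hn, hm, Int.toNat_natCast]
  push_cast
  rw [add_sub_cancel_left]
end

section
/- For integers k, l with 0 ≤ l ≤ k, the curl of B^l_k := (x^l/(2(k-l+1))) ( (y^2+z^2)^{k-l+1} - y^{2(k-l+1)} ) e_x - ( x^{l+1} y^{2(k-l)+1} / (l+1) ) e_y equals Θ^l_k = x^l (y^2+z^2)^{k-l} ( z e_y ∂/∂y-direction minus y in the ∂/∂z-direction ), i.e., Θ^l_k = ∇ × B^l_k. -/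
/-! The curl is computed componentwise by the power rule. The only cancellation is in the
`z`-component: the term `y^(2(k-l+1))` of `B_x` contributes `-x^l y^(2(k-l)+1)` to `∂_y B_x`,
exactly `∂_x B_y`. -/

lemma hasDerivAt_sq_add_pow_succ (a t : ℝ) (m : ℕ) :
    HasDerivAt (fun s : ℝ => (s ^ 2 + a) ^ (m + 1))
      (2 * ((m : ℝ) + 1) * (t ^ 2 + a) ^ m * t) t := by
  refine (((hasDerivAt_pow 2 t).add_const a).fun_pow (m + 1)).congr_deriv ?_
  push_cast
  ring

-- The components of `B^l_k` with `l = n` and `k - l = m`.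
noncomputable def vectorPotentialX (n m : ℕ) (x y z : ℝ) : ℝ :=
  x ^ n / (2 * ((m : ℝ) + 1)) * ((y ^ 2 + z ^ 2) ^ (m + 1) - y ^ (2 * (m + 1)))

noncomputable def vectorPotentialY (n m : ℕ) (x y _z : ℝ) : ℝ :=
  -(x ^ (n + 1) * y ^ (2 * m + 1)) / ((n : ℝ) + 1)

section

variable (n m : ℕ) (x y z : ℝ)

lemma pz_vectorPotentialX :
    pz (vectorPotentialX n m) x y z = x ^ n * (y ^ 2 + z ^ 2) ^ m * z := by
  have h := ((hasDerivAt_sq_add_pow_succ (y ^ 2) z m).sub_const (y ^ (2 * (m + 1)))).const_mul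
    (x ^ n / (2 * ((m : ℝ) + 1)))
  simp only [pz, vectorPotentialX, add_comm (y ^ 2)]
  rw [h.deriv]
  field_simp

lemma py_vectorPotentialX :
    py (vectorPotentialX n m) x y z = x ^ n * ((y ^ 2 + z ^ 2) ^ m * y - y ^ (2 * m + 1)) := by
  have hpow : HasDerivAt (fun s : ℝ => s ^ (2 * (m + 1)))
      (2 * ((m : ℝ) + 1) * y ^ (2 * m + 1)) y := by
    refine (hasDerivAt_pow (2 * (m + 1)) y).congr_deriv ?_
    rw [show 2 * (m + 1) - 1 = 2 * m + 1 by omega]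
    push_cast
    ring
  have h := ((hasDerivAt_sq_add_pow_succ (z ^ 2) y m).fun_sub hpow).const_mul
    (x ^ n / (2 * ((m : ℝ) + 1)))
  simp only [py, vectorPotentialX]
  rw [h.deriv]
  field_simp

lemma px_vectorPotentialY :
    px (vectorPotentialY n m) x y z = -(x ^ n * y ^ (2 * m + 1)) := by
  have h := (((hasDerivAt_pow (n + 1) x).mul_const (y ^ (2 * m + 1))).fun_neg).div_const
    ((n : ℝ) + 1)
  simp only [px, vectorPotentialY]
  rw [h.deriv]
  field_simp
  push_cast
  ring

lemma curl_vectorPotential :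
    curl (vectorPotentialX n m) (vectorPotentialY n m) (fun _ _ _ => 0) x y z =
      (0, x ^ n * (y ^ 2 + z ^ 2) ^ m * z, -(x ^ n * (y ^ 2 + z ^ 2) ^ m * y)) := by
  rw [curl, pz_vectorPotentialX, py_vectorPotentialX, px_vectorPotentialY]
  simp only [pz, py, px, vectorPotentialY, deriv_const', Prod.mk.injEq]
  refine ⟨by ring, by ring, by ring⟩

end

/-- `Θ^l_k = ∇ × B^l_k` where
`B^l_k = (x^l/(2(k-l+1)))((y²+z²)^{k-l+1} - y^{2(k-l+1)}) e_x - (x^{l+1} y^{2(k-l)+1}/(l+1)) e_y`. -/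
theorem Theta_vectorPotential' (k l : ℤ) (hl : 0 ≤ l) (hlk : l ≤ k) :
    ∀ x y z : ℝ,
      (T1 l k x y z, T2 l k x y z, T3 l k x y z) =
        curl (fun x y z =>
            x ^ l.toNat / (2 * ((k : ℝ) - (l : ℝ) + 1)) *
              ((y ^ 2 + z ^ 2) ^ (k - l + 1).toNat - y ^ (2 * (k - l + 1).toNat)))
          (fun x y _ =>
            -(x ^ (l + 1).toNat * y ^ (2 * (k - l).toNat + 1)) / ((l : ℝ) + 1))
          (fun _ _ _ => 0) x y z := by
  intro x y z
  lift l to ℕ using hl with n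
  obtain ⟨m, rfl⟩ : ∃ m : ℕ, k = n + m := ⟨(k - n).toNat, by omega⟩
  simp only [T1, T2, T3, add_sub_cancel_left, Int.toNat_natCast, Int.toNat_natCast_add_one,
    Int.cast_add, Int.cast_natCast]
  exact (curl_vectorPotential n m x y z).symm
end

section
/- For integers k, l with 1 ≤ l ≤ k, the vector field F^l_k admits the Clebsch representation F^l_k = f_1 ∇f_2 + ∇f_3, where f_1 = x^l, f_2 = -((l+1)/(4(k-l+1))) (y^2+z^2)^{k-l+1} - ((k-l+1)/l) x^2 (y^2+z^2)^{k-l}, and f_3 = ((k-l+1)/l) (y^2+z^2)^{k-l} x^{l+2}. -/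
-- Only the three partial derivatives are required, as in `grad`.
def HasGradAt (f : ℝ → ℝ → ℝ → ℝ) (v : ℝ × ℝ × ℝ) (x y z : ℝ) : Prop :=
  HasDerivAt (fun t => f t y z) v.1 x ∧ HasDerivAt (fun t => f x t z) v.2.1 y ∧
    HasDerivAt (fun t => f x y t) v.2.2 z

namespace HasGradAt

variable {f g : ℝ → ℝ → ℝ → ℝ} {v w : ℝ × ℝ × ℝ} {x y z : ℝ}

theorem grad_eq (h : HasGradAt f v x y z) : grad f x y z = v :=
  Prod.ext h.1.deriv (Prod.ext h.2.1.deriv h.2.2.deriv)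

theorem sub (hf : HasGradAt f v x y z) (hg : HasGradAt g w x y z) :
    HasGradAt (fun x y z => f x y z - g x y z) (v - w) x y z :=
  ⟨hf.1.sub hg.1, hf.2.1.sub hg.2.1, hf.2.2.sub hg.2.2⟩

theorem mul (hf : HasGradAt f v x y z) (hg : HasGradAt g w x y z) :
    HasGradAt (fun x y z => f x y z * g x y z) (f x y z • w + g x y z • v) x y z := by
  refine ⟨(hf.1.mul hg.1).congr_deriv ?_, (hf.2.1.mul hg.2.1).congr_deriv ?_,
    (hf.2.2.mul hg.2.2).congr_deriv ?_⟩ <;> simp only [Prod.fst_add, Prod.snd_add,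
      Prod.smul_fst, Prod.smul_snd, smul_eq_mul] <;> ring

end HasGradAt

theorem hasGradAt_const (c x y z : ℝ) : HasGradAt (fun _ _ _ => c) 0 x y z :=
  ⟨hasDerivAt_const x c, hasDerivAt_const y c, hasDerivAt_const z c⟩

theorem hasGradAt_pow_fst (a : ℕ) (x y z : ℝ) :
    HasGradAt (fun x _ _ => x ^ a) (a * x ^ (a - 1), 0, 0) x y z :=
  ⟨hasDerivAt_pow a x, hasDerivAt_const y _, hasDerivAt_const z _⟩

theorem hasGradAt_sq_add_sq_pow (n : ℕ) (x y z : ℝ) :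
    HasGradAt (fun _ y z => (y ^ 2 + z ^ 2) ^ n)
      (0, n * (y ^ 2 + z ^ 2) ^ (n - 1) * (2 * y), n * (y ^ 2 + z ^ 2) ^ (n - 1) * (2 * z))
      x y z := by
  refine ⟨hasDerivAt_const x _, ?_, ?_⟩
  · simpa using ((hasDerivAt_pow 2 y).add_const (z ^ 2)).fun_pow n
  · simpa using ((hasDerivAt_pow 2 z).const_add (y ^ 2)).fun_pow n

/-- Clebsch representation `F^l_k = f₁ ∇f₂ + ∇f₃` with `f₁ = x^l`,
`f₂ = -((l+1)/(4(k-l+1)))(y²+z²)^{k-l+1} - ((k-l+1)/l) x² (y²+z²)^{k-l}`,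
`f₃ = ((k-l+1)/l)(y²+z²)^{k-l} x^{l+2}`. -/
theorem F_clebsch (k l : ℤ) (hl : 1 ≤ l) (hlk : l ≤ k) :
    ∀ x y z : ℝ,
      (F1 l k x y z, F2 l k x y z, F3 l k x y z) =
        (x ^ l.toNat) •
            grad (fun x y z =>
              -(((l : ℝ) + 1) / (4 * ((k : ℝ) - (l : ℝ) + 1))) *
                  (y ^ 2 + z ^ 2) ^ (k - l + 1).toNat -
                (((k : ℝ) - (l : ℝ) + 1) / (l : ℝ)) * x ^ 2 *
                  (y ^ 2 + z ^ 2) ^ (k - l).toNat) x y z +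
          grad (fun x y z =>
            (((k : ℝ) - (l : ℝ) + 1) / (l : ℝ)) * (y ^ 2 + z ^ 2) ^ (k - l).toNat *
              x ^ (l + 2).toNat) x y z := by
  intro x y z
  obtain ⟨L, rfl⟩ := Int.eq_ofNat_of_zero_le (by omega : 0 ≤ l)
  obtain ⟨m, rfl⟩ := Int.le.dest hlk
  have hL : (L : ℝ) ≠ 0 := by exact_mod_cast (by omega : L ≠ 0)
  have hL2 : ((L : ℤ) + 2).toNat = L + 2 := by omega
  simp only [F1, F2, F3, hL2, add_sub_cancel_left, Int.toNat_natCast, Int.toNat_natCast_add_one,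
    Int.cast_add, Int.cast_natCast]
  rw [(((hasGradAt_const _ x y z).mul (hasGradAt_sq_add_sq_pow (m + 1) x y z)).sub
      (((hasGradAt_const _ x y z).mul (hasGradAt_pow_fst 2 x y z)).mul
        (hasGradAt_sq_add_sq_pow m x y z))).grad_eq,
    (((hasGradAt_const _ x y z).mul (hasGradAt_sq_add_sq_pow m x y z)).mul
      (hasGradAt_pow_fst (L + 2) x y z)).grad_eq]
  simp only [smul_zero, add_zero, Prod.smul_mk, Prod.mk_add_mk, Prod.mk_sub_mk, Prod.mk.injEq,
    smul_eq_mul, Nat.add_sub_cancel, Nat.reduceSubDiff, Nat.cast_add, Nat.cast_ofNat, Nat.cast_one]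
  refine ⟨?_, ?_, ?_⟩ <;> field_simp <;> ring
end

section
/- For integers k, l with 0 ≤ l ≤ k and on the region y ≠ 0, the vector field Θ^l_k equals g_1 ∇g_2 + ∇g_3, where g_1 = z/y, g_2 = y^2 x^l (y^2+z^2)^{k-l}, and g_3 = -y z x^l (y^2+z^2)^{k-l}. -/
/-!
With `P = x^l (y²+z²)^{k-l}` we have `g₂ = y² P` and `g₃ = -y z P`, and for any `P` the
derivatives of `P` cancel in `(z/y) ∇(y² P) + ∇(-y z P)`. Only the derivatives falling on
`y²` in `g₂` and on the factors `y`, `z` of `g₃` survive: the sum is `(0, 2zP - zP, -yP) = (0, zP, -yP)`.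
-/

section Clebsch

variable {P : ℝ → ℝ → ℝ → ℝ} {x y z : ℝ}

theorem grad_sq_mul (hPy : DifferentiableAt ℝ (fun t => P x t z) y) :
    grad (fun x y z => y ^ 2 * P x y z) x y z =
      (y ^ 2 * px P x y z, 2 * y * P x y z + y ^ 2 * py P x y z, y ^ 2 * pz P x y z) := by
  have hy' : deriv (fun t => t ^ 2 * P x t z) y = 2 * y * P x y z + y ^ 2 * py P x y z := by
    rw [deriv_fun_mul (by fun_prop) hPy]
    simp [py]
  simp only [grad, px, py, pz, deriv_const_mul_field, hy']

theorem grad_neg_mul_mul (hPy : DifferentiableAt ℝ (fun t => P x t z) y)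
    (hPz : DifferentiableAt ℝ (fun t => P x y t) z) :
    grad (fun x y z => -(y * z * P x y z)) x y z =
      (-(y * z * px P x y z), -(z * P x y z + y * z * py P x y z),
        -(y * P x y z + y * z * pz P x y z)) := by
  have hx' : deriv (fun t => -(y * z * P t y z)) x = -(y * z * px P x y z) := by
    rw [deriv.fun_neg, deriv_const_mul_field]; rfl
  have hy' : deriv (fun t => -(t * z * P x t z)) y = -(z * P x y z + y * z * py P x y z) := by
    rw [deriv.fun_neg, deriv_fun_mul (by fun_prop) hPy]
    simp [py]
  have hz' : deriv (fun t => -(y * t * P x y t)) z = -(y * P x y z + y * z * pz P x y z) := by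
    rw [deriv.fun_neg, deriv_fun_mul (by fun_prop) hPz]
    simp [pz]
  simp only [grad, px, py, pz, hx', hy', hz']

theorem clebsch_sq_mul (hy : y ≠ 0) (hPy : DifferentiableAt ℝ (fun t => P x t z) y)
    (hPz : DifferentiableAt ℝ (fun t => P x y t) z) :
    (0, P x y z * z, -(P x y z * y)) =
      (z / y) • grad (fun x y z => y ^ 2 * P x y z) x y z +
        grad (fun x y z => -(y * z * P x y z)) x y z := by
  rw [grad_sq_mul hPy, grad_neg_mul_mul hPy hPz]
  simp only [Prod.smul_mk, Prod.mk_add_mk, smul_eq_mul, Prod.mk.injEq]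
  refine ⟨?_, ?_, ?_⟩ <;> field_simp <;> ring

end Clebsch

theorem Theta_clebsch_general (k l : ℤ) :
    ∀ x y z : ℝ, y ≠ 0 →
      (T1 l k x y z, T2 l k x y z, T3 l k x y z) =
        (z / y) •
            grad (fun x y z =>
              y ^ 2 * x ^ l.toNat * (y ^ 2 + z ^ 2) ^ (k - l).toNat) x y z +
          grad (fun x y z =>
            -(y * z * x ^ l.toNat * (y ^ 2 + z ^ 2) ^ (k - l).toNat)) x y z := by
  intro x y z hy
  have key := clebsch_sq_mul (P := fun x y z => x ^ l.toNat * (y ^ 2 + z ^ 2) ^ (k - l).toNat)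
    (x := x) (z := z) hy (by fun_prop) (by fun_prop)
  simpa only [T1, T2, T3, mul_assoc] using key

/-- Clebsch representation `Θ^l_k = g₁ ∇g₂ + ∇g₃` on the region `y ≠ 0`, with `g₁ = z/y`,
`g₂ = y² x^l (y²+z²)^{k-l}` and `g₃ = -y z x^l (y²+z²)^{k-l}`. -/
theorem Theta_clebsch (k l : ℤ) (hl : 0 ≤ l) (hlk : l ≤ k) :
    ∀ x y z : ℝ, y ≠ 0 →
      (T1 l k x y z, T2 l k x y z, T3 l k x y z) =
        (z / y) •
            grad (fun x y z =>
              y ^ 2 * x ^ l.toNat * (y ^ 2 + z ^ 2) ^ (k - l).toNat) x y z +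
          grad (fun x y z =>
            -(y * z * x ^ l.toNat * (y ^ 2 + z ^ 2) ^ (k - l).toNat)) x y z :=
  Theta_clebsch_general k l
end

section
/- Let v_j = Σ_{i=-1}^{⌊j/2⌋} a_i F^i_j + Σ_{i=0}^{⌊j/2⌋} b_i Θ^i_j (a finite real linear combination of the fields F^i_j and Θ^i_j of grade j ≥ 1). If the curl of v_j vanishes identically, then v_j = 0. In other words, no nonzero graded homogeneous element of grade j ≥ 1 of the Lie algebra spanned by the F- and Θ-terms is irrotational. -/
/-- The components of the graded homogeneous element
`v_j = Σ_{i=-1}^{⌊j/2⌋} aᵢ F^i_j + Σ_{i=0}^{⌊j/2⌋} bᵢ Θ^i_j`. -/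
noncomputable def v1 (j : ℤ) (a b : ℤ → ℝ) (x y z : ℝ) : ℝ :=
  (∑ i ∈ Finset.Icc (-1 : ℤ) (j / 2), a i * F1 i j x y z) +
    ∑ i ∈ Finset.Icc (0 : ℤ) (j / 2), b i * T1 i j x y z
noncomputable def v2 (j : ℤ) (a b : ℤ → ℝ) (x y z : ℝ) : ℝ :=
  (∑ i ∈ Finset.Icc (-1 : ℤ) (j / 2), a i * F2 i j x y z) +
    ∑ i ∈ Finset.Icc (0 : ℤ) (j / 2), b i * T2 i j x y z
noncomputable def v3 (j : ℤ) (a b : ℤ → ℝ) (x y z : ℝ) : ℝ :=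
  (∑ i ∈ Finset.Icc (-1 : ℤ) (j / 2), a i * F3 i j x y z) +
    ∑ i ∈ Finset.Icc (0 : ℤ) (j / 2), b i * T3 i j x y z

/-!
On the line `y = 1, z = 0` the `x`-component of the curl of `v_j` is `-∑ (2(j-i)+2) bᵢ xⁱ`, so
all `bᵢ` vanish. On the plane `y = 0` the `Θ`-terms drop out of the `y`-component, which is
`∑ aᵢ ((j-i+1)·2(j-i) x^{i+1} z^{2(j-i)-1} + ((i+1)/2)·i x^{i-1} z^{2(j-i)+1})`. Substituting
`z = x²` gives the powers `x^{4j-3i-1}` and `x^{4j-3i+1}`, which are pairwise distinct (the two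
families lie in different residue classes mod 3); hence every `aᵢ (j-i+1)·2(j-i)` vanishes,
and `j - i ≥ 1` because `i ≤ ⌊j/2⌋` and `j ≥ 1`.
-/

open Polynomial in
theorem eq_zero_of_forall_sum_mul_pow_eq_zero {R ι : Type*} [CommRing R] [IsDomain R] [Infinite R]
    {s : Finset ι} {c : ι → R} {e : ι → ℕ} (he : Set.InjOn e s)
    (h : ∀ x : R, ∑ i ∈ s, c i * x ^ e i = 0) : ∀ i ∈ s, c i = 0 := by
  have hp : ∑ i ∈ s, C (c i) * X ^ e i = 0 :=
    Polynomial.funext fun x => by simpa [eval_finsetSum] using h x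
  intro i hi
  have := congrArg (coeff · (e i)) hp
  simp only [finsetSum_coeff, coeff_C_mul_X_pow, coeff_zero] at this
  rwa [Finset.sum_eq_single_of_mem i hi fun k hk hki => if_neg fun h => hki (he hk hi h.symm),
    if_pos rfl] at this

section PartialDerivatives

variable (l k : ℤ)

theorem F3_of_z_eq_zero (x y : ℝ) : F3 l k x y 0 = 0 := by simp [F3]

theorem T3_of_y_eq_zero (x z : ℝ) : T3 l k x 0 z = 0 := by simp [T3]

theorem hasDerivAt_T3_y (x y : ℝ) :
    HasDerivAt (fun t => T3 l k x t 0)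
      (-((2 * (k - l).toNat + 1 : ℕ) * x ^ l.toNat * y ^ (2 * (k - l).toNat))) y := by
  refine (((hasDerivAt_pow (2 * (k - l).toNat + 1) y).const_mul
    (-x ^ l.toNat)).congr_of_eventuallyEq (.of_forall fun t => ?_)).congr_deriv ?_
  · simp only [T3]; ring
  · simp only [Nat.add_sub_cancel]; ring

theorem hasDerivAt_F2_z_zero (x y : ℝ) : HasDerivAt (fun t => F2 l k x y t) 0 0 := by
  refine (((((hasDerivAt_pow 2 (0 : ℝ)).const_add (y ^ 2)).pow (k - l).toNat).const_mul
    (-(((l : ℝ) + 1) / 2) * x ^ l.toNat * y)).congr_of_eventuallyEq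
    (.of_forall fun t => ?_)).congr_deriv ?_
  · simp only [F2, Pi.pow_apply]
  · simp

theorem hasDerivAt_T2_z_zero (x y : ℝ) :
    HasDerivAt (fun t => T2 l k x y t) (x ^ l.toNat * (y ^ 2) ^ (k - l).toNat) 0 := by
  refine ((((((hasDerivAt_pow 2 (0 : ℝ)).const_add (y ^ 2)).pow (k - l).toNat).mul
    (hasDerivAt_id 0)).const_mul (x ^ l.toNat)).congr_of_eventuallyEq
    (.of_forall fun t => ?_)).congr_deriv ?_
  · simp only [T2, Pi.mul_apply, Pi.pow_apply, id]; ring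
  · simp

theorem hasDerivAt_F1_z (x z : ℝ) :
    HasDerivAt (fun t => F1 l k x 0 t)
      (((k : ℝ) - l + 1) * x ^ (l + 1).toNat * (2 * (k - l).toNat : ℕ) *
        z ^ (2 * (k - l).toNat - 1)) z := by
  refine (((hasDerivAt_pow (2 * (k - l).toNat) z).const_mul
    (((k : ℝ) - l + 1) * x ^ (l + 1).toNat)).congr_of_eventuallyEq
    (.of_forall fun t => ?_)).congr_deriv ?_
  · simp only [F1]; ring
  · ring

theorem hasDerivAt_F3_x (x z : ℝ) :
    HasDerivAt (fun t => F3 l k t 0 z)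
      (-(((l : ℝ) + 1) / 2) * l.toNat * x ^ (l.toNat - 1) * z ^ (2 * (k - l).toNat + 1)) x := by
  refine (((hasDerivAt_pow l.toNat x).const_mul
    (-(((l : ℝ) + 1) / 2) * z ^ (2 * (k - l).toNat + 1))).congr_of_eventuallyEq
    (.of_forall fun t => ?_)).congr_deriv ?_
  · simp only [F3]; ring
  · ring

end PartialDerivatives

theorem HasDerivAt.sum_mul_add_sum_mul {ι : Type*} {s t : Finset ι} (a b : ι → ℝ)
    {f g : ι → ℝ → ℝ} {f' g' : ι → ℝ} {x : ℝ}
    (hf : ∀ i ∈ s, HasDerivAt (f i) (f' i) x) (hg : ∀ i ∈ t, HasDerivAt (g i) (g' i) x) :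
    HasDerivAt (fun u => ∑ i ∈ s, a i * f i u + ∑ i ∈ t, b i * g i u)
      (∑ i ∈ s, a i * f' i + ∑ i ∈ t, b i * g' i) x :=
  (HasDerivAt.fun_sum fun i hi => (hf i hi).const_mul (a i)).add
    (HasDerivAt.fun_sum fun i hi => (hg i hi).const_mul (b i))

theorem curl_v_fst_at_one_zero (j : ℤ) (a b : ℤ → ℝ) (x : ℝ) :
    (curl (v1 j a b) (v2 j a b) (v3 j a b) x 1 0).1 =
      -∑ i ∈ Finset.Icc (0 : ℤ) (j / 2),
        (2 * (j - i).toNat + 2 : ℕ) * b i * x ^ i.toNat := by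
  have h3 : py (v3 j a b) x 1 0 = _ :=
    (HasDerivAt.sum_mul_add_sum_mul a b
      (fun i _ => (hasDerivAt_const (1 : ℝ) (0 : ℝ)).congr_of_eventuallyEq
        (.of_forall fun t => F3_of_z_eq_zero i j x t))
      (fun i _ => hasDerivAt_T3_y i j x 1)).deriv
  have h2 : pz (v2 j a b) x 1 0 = _ :=
    (HasDerivAt.sum_mul_add_sum_mul a b (fun i _ => hasDerivAt_F2_z_zero i j x 1)
      (fun i _ => hasDerivAt_T2_z_zero i j x 1)).deriv
  simp only [curl, h3, h2, mul_zero, Finset.sum_const_zero, zero_add, one_pow, mul_one,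
    ← Finset.sum_sub_distrib, ← Finset.sum_neg_distrib]
  exact Finset.sum_congr rfl fun i _ => by push_cast; ring

theorem curl_v_snd_at_zero (j : ℤ) (a b : ℤ → ℝ) (x z : ℝ) :
    (curl (v1 j a b) (v2 j a b) (v3 j a b) x 0 z).2.1 =
      ∑ i ∈ Finset.Icc (-1 : ℤ) (j / 2), a i *
        (((j : ℝ) - i + 1) * (2 * (j - i).toNat : ℕ) * x ^ (i + 1).toNat *
            z ^ (2 * (j - i).toNat - 1) +
          ((i : ℝ) + 1) / 2 * i.toNat * x ^ (i.toNat - 1) * z ^ (2 * (j - i).toNat + 1)) := by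
  have h1 : pz (v1 j a b) x 0 z = _ :=
    (HasDerivAt.sum_mul_add_sum_mul a b (fun i _ => hasDerivAt_F1_z i j x z)
      (fun i _ => hasDerivAt_const z (0 : ℝ))).deriv
  have h3 : px (v3 j a b) x 0 z = _ :=
    (HasDerivAt.sum_mul_add_sum_mul a b (fun i _ => hasDerivAt_F3_x i j x z)
      (fun i _ => (hasDerivAt_const x (0 : ℝ)).congr_of_eventuallyEq
        (.of_forall fun t => T3_of_y_eq_zero i j t z))).deriv
  simp only [curl, h1, h3, mul_zero, Finset.sum_const_zero, add_zero, ← Finset.sum_sub_distrib]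
  exact Finset.sum_congr rfl fun i _ => by ring

theorem b_eq_zero_of_curl_eq_zero {j : ℤ} {a b : ℤ → ℝ}
    (hcurl : ∀ x y z : ℝ, curl (v1 j a b) (v2 j a b) (v3 j a b) x y z = 0) :
    ∀ i ∈ Finset.Icc (0 : ℤ) (j / 2), b i = 0 := by
  have hsum (x : ℝ) :
      ∑ i ∈ Finset.Icc (0 : ℤ) (j / 2),
        (2 * (j - i).toNat + 2 : ℕ) * b i * x ^ i.toNat = 0 := by
    have h := congrArg Prod.fst (hcurl x 1 0)
    simpa only [curl_v_fst_at_one_zero, Prod.fst_zero, neg_eq_zero] using h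
  have hinj : Set.InjOn Int.toNat (Finset.Icc (0 : ℤ) (j / 2)) := by
    intro i hi i' hi' h
    simp only [Finset.coe_Icc, Set.mem_Icc] at hi hi'
    omega
  intro i hi
  exact (mul_eq_zero.mp (eq_zero_of_forall_sum_mul_pow_eq_zero hinj hsum i hi)).resolve_left
    (by positivity)

theorem a_eq_zero_of_curl_eq_zero {j : ℤ} (hj : 1 ≤ j) {a b : ℤ → ℝ}
    (hcurl : ∀ x y z : ℝ, curl (v1 j a b) (v2 j a b) (v3 j a b) x y z = 0) :
    ∀ i ∈ Finset.Icc (-1 : ℤ) (j / 2), a i = 0 := by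
  set A : ℤ → ℝ := fun i => a i * (((j : ℝ) - i + 1) * (2 * (j - i).toNat : ℕ))
  set B : ℤ → ℝ := fun i => a i * (((i : ℝ) + 1) / 2 * i.toNat)
  set e : ℤ ⊕ ℤ → ℕ := Sum.elim (fun i => (i + 1).toNat + 2 * (2 * (j - i).toNat - 1))
    (fun i => (i.toNat - 1) + 2 * (2 * (j - i).toNat + 1))
  have hsum (x : ℝ) : ∑ p ∈ (Finset.Icc (-1 : ℤ) (j / 2)).disjSum (Finset.Icc 1 (j / 2)),
      Sum.elim A B p * x ^ e p = 0 := by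
    have h := congrArg (·.2.1) (hcurl x 0 (x ^ 2))
    simp only [curl_v_snd_at_zero, Prod.snd_zero, Prod.fst_zero] at h
    -- For `i ≤ 0` the second term vanishes, but its truncated exponent `i.toNat - 1` would
    -- collide with the first term of index `-1`, so it is dropped.
    have hB : ∀ i ∈ Finset.Icc (-1 : ℤ) (j / 2), i ∉ Finset.Icc 1 (j / 2) →
        B i * x ^ e (.inr i) = 0 := by
      intro i hi hi'
      rw [Finset.mem_Icc] at hi hi'
      simp [B, Int.toNat_of_nonpos (by omega : i ≤ 0)]
    rw [Finset.sum_disjSum]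
    simp only [Sum.elim_inl, Sum.elim_inr]
    rw [Finset.sum_subset (Finset.Icc_subset_Icc_left (by norm_num)) hB,
      ← Finset.sum_add_distrib, ← h]
    refine Finset.sum_congr rfl fun i _ => ?_
    simp only [A, B, e, Sum.elim_inl, Sum.elim_inr, pow_add, pow_mul]
    ring
  have hinj : Set.InjOn e ((Finset.Icc (-1 : ℤ) (j / 2)).disjSum (Finset.Icc 1 (j / 2))) := by
    rintro (i | i) hi (i' | i') hi' h <;>
      simp only [e, Finset.mem_coe, Finset.inl_mem_disjSum, Finset.inr_mem_disjSum, Finset.mem_Icc,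
        Sum.elim_inl, Sum.elim_inr, Sum.inl.injEq, Sum.inr.injEq, reduceCtorEq] at hi hi' h ⊢ <;>
      omega
  intro i hi
  have hA :=
    eq_zero_of_forall_sum_mul_pow_eq_zero hinj hsum (.inl i) (Finset.inl_mem_disjSum.mpr hi)
  rw [Finset.mem_Icc] at hi
  have hij : (i : ℝ) < j + 1 := by exact_mod_cast (by omega : i < j + 1)
  have hm : 0 < 2 * (j - i).toNat := by omega
  exact (mul_eq_zero.mp hA).resolve_right (mul_ne_zero (by linarith) (by positivity))

/-- No nonzero graded homogeneous element of grade `j ≥ 1` of the Lie algebra spanned by the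
`F`- and `Θ`-terms is irrotational: if the curl of `v_j` vanishes identically, then `v_j = 0`. -/
theorem not_potential (j : ℤ) (hj : 1 ≤ j) (a b : ℤ → ℝ)
    (hcurl : ∀ x y z : ℝ,
      curl (v1 j a b) (v2 j a b) (v3 j a b) x y z = 0) :
    ∀ x y z : ℝ, (v1 j a b x y z, v2 j a b x y z, v3 j a b x y z) = (0, 0, 0) := by
  have ha := a_eq_zero_of_curl_eq_zero hj hcurl
  have hb := b_eq_zero_of_curl_eq_zero hcurl
  have hF (f : ℤ → ℝ) : ∑ i ∈ Finset.Icc (-1 : ℤ) (j / 2), a i * f i = 0 :=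
    Finset.sum_eq_zero fun i hi => by rw [ha i hi, zero_mul]
  have hT (f : ℤ → ℝ) : ∑ i ∈ Finset.Icc (0 : ℤ) (j / 2), b i * f i = 0 :=
    Finset.sum_eq_zero fun i hi => by rw [hb i hi, zero_mul]
  intro x y z
  simp only [v1, v2, v3, hF, hT, add_zero]
end
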